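/- Let G be a graph on n ≥ 3 vertices with n even, and let G̅ be its complement. Then mp(G) + mp(G̅) ≤ n − 1. Moreover, if equality holds, then G is regular. -/

import Mathlib

/-!
Deleting the edges at a vertex `v` isolates it, which rules out a perfect matching, and an
almost-perfect matching is impossible anyway because it covers an odd number `n - 1` of
vertices. Hence `mp G ≤ δ(G)` and `mp Gᶜ ≤ δ(Gᶜ) = n - 1 - Δ(G)`, so
`mp G + mp Gᶜ ≤ n - 1 - (Δ(G) - δ(G))`, with equality only if `Δ(G) = δ(G)`.
-/

open SimpleGraph

/-- An almost-perfect matching: a matching covering all vertices except exactly one. -/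
def SimpleGraph.Subgraph.IsAlmostPerfectMatching {V : Type*} {G : SimpleGraph V}
    (M : G.Subgraph) : Prop :=
  M.IsMatching ∧ ∃ v : V, M.verts = {v}ᶜ

/-- `G` has a perfect matching or an almost-perfect matching. -/
def SimpleGraph.HasGoodMatching {V : Type*} (G : SimpleGraph V) : Prop :=
  (∃ M : G.Subgraph, M.IsPerfectMatching) ∨ (∃ M : G.Subgraph, M.IsAlmostPerfectMatching)

/-- The matching preclusion number of `G`. -/
noncomputable def SimpleGraph.mp {V : Type*} [Fintype V] (G : SimpleGraph V) : ℕ :=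
  sInf { k | ∃ F : Finset (Sym2 V), ↑F ⊆ G.edgeSet ∧ F.card = k ∧
    ¬ (G.deleteEdges ↑F).HasGoodMatching }

namespace SimpleGraph

variable {V : Type*} [Fintype V]

theorem Subgraph.not_isAlmostPerfectMatching_of_even_card {H : SimpleGraph V}
    (hn : Even (Fintype.card V)) (M : H.Subgraph) : ¬ M.IsAlmostPerfectMatching := by
  classical
  rintro ⟨hM, u, hu⟩
  have : Fintype M.verts := Fintype.ofFinite _
  have hcard : M.verts.toFinset.card = Fintype.card V - 1 := by
    simp only [hu, Set.toFinset_compl, Set.toFinset_singleton, Finset.card_compl,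
      Finset.card_singleton]
  have heven := hM.even_card
  rw [hcard, Nat.even_sub (Fintype.card_pos_iff.mpr ⟨u⟩)] at heven
  exact absurd hn (by simpa using heven)

theorem not_hasGoodMatching_of_isolated {H : SimpleGraph V} (hn : Even (Fintype.card V))
    (v : V) (hv : ∀ w, ¬ H.Adj v w) : ¬ H.HasGoodMatching := by
  rintro (⟨M, hM⟩ | ⟨M, hM⟩)
  · obtain ⟨w, hw, -⟩ := hM.1 (hM.2 v)
    exact hv w (M.adj_sub hw)
  · exact M.not_isAlmostPerfectMatching_of_even_card hn hM

theorem mp_le_degree (G : SimpleGraph V) [DecidableRel G.Adj] (hn : Even (Fintype.card V))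
    (v : V) : G.mp ≤ G.degree v := by
  classical
  refine Nat.sInf_le ⟨G.incidenceFinset v, fun e he => ?_, G.card_incidenceFinset_eq_degree v,
    not_hasGoodMatching_of_isolated hn v fun w hw => ?_⟩
  · exact ((mem_incidenceFinset G v e).mp he).1
  · rw [deleteEdges_adj] at hw
    exact hw.2 ((mem_incidenceFinset G v _).mpr ⟨hw.1, Sym2.mem_mk_left v w⟩)

theorem mp_add_mp_compl_le (G : SimpleGraph V) [DecidableRel G.Adj]
    (hn : Even (Fintype.card V)) (v w : V) :
    G.mp + Gᶜ.mp ≤ G.degree v + (Fintype.card V - 1 - G.degree w) := by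
  classical
  have hG := G.mp_le_degree hn v
  have hGc := Gᶜ.mp_le_degree hn w
  rw [degree_compl] at hGc
  omega

end SimpleGraph

theorem stmt19 {V : Type*} [Fintype V] (G : SimpleGraph V) [DecidableRel G.Adj]
    (hn : Even (Fintype.card V)) (h3 : 3 ≤ Fintype.card V) :
    G.mp + Gᶜ.mp ≤ Fintype.card V - 1 ∧
      (G.mp + Gᶜ.mp = Fintype.card V - 1 → ∃ d, G.IsRegularOfDegree d) := by
  obtain ⟨v₀⟩ : Nonempty V := Fintype.card_pos_iff.mp (by omega)
  have hdeg : ∀ v, G.degree v < Fintype.card V := G.degree_lt_card_verts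
  refine ⟨?_, fun heq => ⟨G.degree v₀, fun w => ?_⟩⟩
  · have := G.mp_add_mp_compl_le hn v₀ v₀
    have := hdeg v₀
    omega
  · have := G.mp_add_mp_compl_le hn v₀ w
    have := G.mp_add_mp_compl_le hn w v₀
    have := hdeg v₀
    have := hdeg w
    omega
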